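/- arXiv:2505.15579 — 2 statements merged into one kernel-verified Lean document; each statement's English description precedes it below -/
import Mathlib

section
/- Let m, n ≥ 1 be integers, let X be a real number with X ≤ 1, and let K ≥ 0 be a real number. If X ≤ K/λ + λ/(8 m n) for every integer λ with 1 ≤ λ ≤ 4 m n, then X ≤ √( (K + 1) / (2 m n) ). -/
set_option maxHeartbeats 1000000 in
/-- if `X ≤ 1`, `K ≥ 0`, and `X ≤ K/λ + λ/(8mn)` for every integer
`λ` with `1 ≤ λ ≤ 4mn`, then `X ≤ √((K + 1)/(2mn))`. -/
theorem le_sqrt_of_forall_lambda (m n : ℕ) (hm : 1 ≤ m) (hn : 1 ≤ n)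
    (X K : ℝ) (hX : X ≤ 1) (hK : 0 ≤ K)
    (h : ∀ lam : ℤ, 1 ≤ lam → lam ≤ 4 * m * n →
      X ≤ K / (lam : ℝ) + (lam : ℝ) / (8 * m * n)) :
    X ≤ Real.sqrt ((K + 1) / (2 * m * n)) := by
  have hmn : (1 : ℝ) ≤ (m : ℝ) * n := by
    have h1 : (1 : ℝ) ≤ (m : ℝ) := by exact_mod_cast hm
    have h2 : (1 : ℝ) ≤ (n : ℝ) := by exact_mod_cast hn
    nlinarith
  set mn : ℝ := (m : ℝ) * n with hmndef
  have hmnpos : (0 : ℝ) < mn := by linarith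
  by_cases hcase : 2 * mn ≤ K + 1
  · -- trivial case: the sqrt is at least 1
    have h1 : (1 : ℝ) ≤ (K + 1) / (2 * mn) := by
      rw [le_div_iff₀ (by linarith)]; linarith
    calc X ≤ 1 := hX
      _ = Real.sqrt 1 := (Real.sqrt_one).symm
      _ ≤ Real.sqrt ((K + 1) / (2 * (m : ℝ) * n)) := by
          apply Real.sqrt_le_sqrt; rw [mul_assoc]; exact h1
  · push_neg at hcase
    set s : ℝ := Real.sqrt (8 * mn * K) with hsdef
    have hs0 : 0 ≤ s := Real.sqrt_nonneg _
    have hs2 : s ^ 2 = 8 * mn * K := Real.sq_sqrt (by nlinarith)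
    set t : ℝ := Real.sqrt ((K + 1) / (2 * mn)) with htdef
    have ht0 : 0 ≤ t := Real.sqrt_nonneg _
    have ht2 : t ^ 2 = (K + 1) / (2 * mn) := Real.sq_sqrt (by
      apply div_nonneg (by linarith) (by linarith))
    have ht2' : 2 * mn * t ^ 2 = K + 1 := by
      rw [ht2]; field_simp
    set u : ℝ := 4 * mn * t with hudef
    have hu0 : 0 ≤ u := by nlinarith
    have hu2 : u ^ 2 = s ^ 2 + 8 * mn := by
      rw [hs2, hudef]; nlinarith [ht2']
    have hupos : 0 < u := by nlinarith
    have hsu : s < u := by nlinarith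
    -- t < 1 hence u < 4mn
    have hult : u < 4 * mn := by
      have : t < 1 := by nlinarith [ht2]
      nlinarith
    have h8 : (u - s) * (u + s) = 8 * mn := by linear_combination hu2
    have hus : s + 1 < u := by
      by_contra hcon
      push_neg at hcon
      have hstep : (u - s) * (u + s) ≤ 1 * (u + s) :=
        mul_le_mul_of_nonneg_right (by linarith) (by linarith)
      rw [h8, one_mul] at hstep
      linarith
    set lam : ℤ := ⌈s⌉ + 1 with hlamdef
    have hlam1 : 1 ≤ lam := by
      have : (0 : ℤ) ≤ ⌈s⌉ := Int.ceil_nonneg hs0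
      omega
    have hlamge : s ≤ (lam : ℝ) := by
      have h' := Int.le_ceil s
      rw [hlamdef]; push_cast; linarith
    have hlamle : (lam : ℝ) ≤ s + 2 := by
      have h' := Int.ceil_lt_add_one s
      rw [hlamdef]; push_cast; linarith
    have hlamub : lam ≤ 4 * m * n := by
      have hsle : s ≤ 4 * mn - 1 := by
        have h1 : s ^ 2 ≤ (4 * mn - 1) ^ 2 := by nlinarith
        nlinarith [sq_nonneg (s - (4 * mn - 1))]
      have hceil : ⌈s⌉ ≤ (4 * m * n : ℤ) - 1 := by
        apply Int.ceil_le.mpr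
        push_cast
        rw [hmndef] at hsle
        linarith
      omega
    have hlamR : (0 : ℝ) < (lam : ℝ) := by exact_mod_cast hlam1
    have hkey := h lam hlam1 hlamub
    have h8pos : (0 : ℝ) < 8 * (m : ℝ) * n := by rw [mul_assoc]; linarith
    have hgoal : K / (lam : ℝ) + (lam : ℝ) / (8 * (m : ℝ) * n) ≤ t := by
      rw [div_add_div _ _ (ne_of_gt hlamR) (ne_of_gt h8pos),
        div_le_iff₀ (by exact mul_pos hlamR h8pos)]
      have hmain : s ^ 2 + (lam : ℝ) ^ 2 ≤ 2 * (lam : ℝ) * u := by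
        nlinarith [sq_nonneg ((lam : ℝ) - s - 1), hus, hlamR, hlamge, hlamle]
      have h8eq : (8 : ℝ) * m * n = 8 * mn := by rw [hmndef]; ring
      rw [h8eq]
      calc K * (8 * mn) + (lam : ℝ) * (lam : ℝ)
          = s ^ 2 + (lam : ℝ) ^ 2 := by rw [hs2]; ring
        _ ≤ 2 * (lam : ℝ) * u := hmain
        _ = t * ((lam : ℝ) * (8 * mn)) := by rw [hudef]; ring
    calc X ≤ K / (lam : ℝ) + (lam : ℝ) / (8 * (m : ℝ) * n) := hkey
      _ ≤ t := hgoal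
      _ = Real.sqrt ((K + 1) / (2 * (m : ℝ) * n)) := by rw [htdef, hmndef, mul_assoc]
end

section
/- In the transductive multi-task setting with n tasks and m samples per task, fix a hyper-prior 𝒫 ∈ M(M(ℱ)) and a loss ℓ: 𝒴×𝒴 → [0,1]. Let 𝔓 be the distribution on M(ℱ) × ℱ^n obtained by sampling P ∼ 𝒫 and then f_1,…,f_n i.i.d. from P, independently of the datasets S_1,…,S_n. Then for every λ > 0: E_{S_1,…,S_n} E_{(P, f_1,…,f_n) ∼ 𝔓} ∏_{i=1}^n exp( (λ/n) · Δ_i(f_i) ) ≤ exp( λ² / (8 n m) ), where Δ_i(f) = E_{(x,y)∼D_i} ℓ(y, f(x)) − (1/m) Σ_{j=1}^m ℓ(y_i^j, f(x_i^j)). -/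
open MeasureTheory
open scoped ENNReal

/-- The canonical σ-algebra on the space of probability measures, induced from the
σ-algebra on measures generated by the evaluation maps. -/
instance {Ω : Type*} [MeasurableSpace Ω] : MeasurableSpace (ProbabilityMeasure Ω) :=
  MeasurableSpace.comap ProbabilityMeasure.toMeasure inferInstance

/-!
For fixed models `(P, f₁, …, fₙ)` the samples are independent of the models, so the integral over
the data factorizes into `n * m` one-sample exponential moments of `λ/(nm) · (E ℓ - ℓ)`, each at
most `exp (λ² / (8 n² m²))` by Hoeffding's lemma. Exchanging the two integrals (Fubini) gives the
bound, since the model distribution has total mass at most one.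
-/

open ProbabilityTheory Real

section EmpiricalGap

variable {Z : Type*} [MeasurableSpace Z] {μ : Measure Z}

theorem integral_exp_mul_integral_sub_le [IsProbabilityMeasure μ] {X : Z → ℝ} {a b : ℝ}
    (hX : AEMeasurable X μ) (hab : ∀ᵐ z ∂μ, X z ∈ Set.Icc a b) (t : ℝ) :
    ∫ z, exp (t * (∫ w, X w ∂μ - X z)) ∂μ ≤ exp (t ^ 2 * (b - a) ^ 2 / 8) := by
  have h := (hasSubgaussianMGF_of_mem_Icc hX hab).mgf_le (-t)
  convert h using 1
  · simp only [mgf]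
    congr 1 with z
    ring_nf
  · congr 1
    push_cast
    rw [Real.norm_eq_abs, div_pow, sq_abs]
    ring

noncomputable def empiricalGap (μ : Measure Z) (X : Z → ℝ) {m : ℕ} (s : Fin m → Z) : ℝ :=
  ∫ z, X z ∂μ - (1 / m : ℝ) * ∑ j, X (s j)

theorem exp_mul_empiricalGap_eq_prod (X : Z → ℝ) {m : ℕ} (hm : m ≠ 0) (t : ℝ) (s : Fin m → Z) :
    exp (t * empiricalGap μ X s) = ∏ j, exp (t / m * (∫ z, X z ∂μ - X (s j))) := by
  rw [← exp_sum, empiricalGap, ← Finset.mul_sum, Finset.sum_sub_distrib, Finset.sum_const,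
    Finset.card_univ, Fintype.card_fin, nsmul_eq_mul]
  field_simp

theorem abs_empiricalGap_le [IsProbabilityMeasure μ] {X : Z → ℝ} {a b : ℝ}
    (hX : AEMeasurable X μ) (hab : ∀ z, X z ∈ Set.Icc a b) {m : ℕ} (hm : m ≠ 0) (s : Fin m → Z) :
    |empiricalGap μ X s| ≤ b - a := by
  have hint : Integrable X μ := .of_mem_Icc a b hX (ae_of_all _ hab)
  have hmean : ∫ z, X z ∂μ ∈ Set.Icc a b := by
    constructor
    · simpa using integral_mono (integrable_const a) hint fun z => (hab z).1
    · simpa using integral_mono hint (integrable_const b) fun z => (hab z).2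
  have havg : (1 / m : ℝ) * ∑ j, X (s j) ∈ Set.Icc a b := by
    have hm' : (0 : ℝ) < m := by positivity
    have hlo := Finset.card_nsmul_le_sum Finset.univ (fun j => X (s j)) a fun j _ => (hab _).1
    have hhi := Finset.sum_le_card_nsmul Finset.univ (fun j => X (s j)) b fun j _ => (hab _).2
    simp only [Finset.card_univ, Fintype.card_fin, nsmul_eq_mul] at hlo hhi
    constructor
    · rw [one_div_mul_eq_div, le_div_iff₀ hm']; linarith
    · rw [one_div_mul_eq_div, div_le_iff₀ hm']; linarith
  rw [empiricalGap, abs_le]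
  constructor <;> linarith [hmean.1, hmean.2, havg.1, havg.2]

theorem integral_exp_mul_empiricalGap_le [IsProbabilityMeasure μ] {X : Z → ℝ} {a b : ℝ}
    (hX : AEMeasurable X μ) (hab : ∀ᵐ z ∂μ, X z ∈ Set.Icc a b) {m : ℕ} (hm : m ≠ 0) (t : ℝ) :
    ∫ s, exp (t * empiricalGap μ X s) ∂(Measure.pi fun _ : Fin m => μ)
      ≤ exp (t ^ 2 * (b - a) ^ 2 / (8 * m)) := by
  simp_rw [exp_mul_empiricalGap_eq_prod X hm t]
  rw [integral_fintype_prod_eq_pow fun z => exp (t / m * (∫ w, X w ∂μ - X z)), Fintype.card_fin]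
  calc (∫ z, exp (t / m * (∫ w, X w ∂μ - X z)) ∂μ) ^ m
      ≤ exp ((t / m) ^ 2 * (b - a) ^ 2 / 8) ^ m :=
        pow_le_pow_left₀ (integral_nonneg fun _ => (exp_pos _).le)
          (integral_exp_mul_integral_sub_le hX hab _) m
    _ = exp (t ^ 2 * (b - a) ^ 2 / (8 * m)) := by
        rw [← exp_nat_mul]
        congr 1
        field_simp

theorem integral_prod_exp_mul_empiricalGap_le {ι : Type*} [Fintype ι] (μ : ι → Measure Z)
    [∀ i, IsProbabilityMeasure (μ i)] {X : ι → Z → ℝ} {a b : ℝ}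
    (hX : ∀ i, AEMeasurable (X i) (μ i)) (hab : ∀ i, ∀ᵐ z ∂μ i, X i z ∈ Set.Icc a b)
    {m : ℕ} (hm : m ≠ 0) (t : ℝ) :
    ∫ S, ∏ i, exp (t * empiricalGap (μ i) (X i) (S i))
        ∂(Measure.pi fun i => Measure.pi fun _ : Fin m => μ i)
      ≤ exp (Fintype.card ι * (t ^ 2 * (b - a) ^ 2 / (8 * m))) := by
  rw [integral_fintype_prod_eq_prod fun i s => exp (t * empiricalGap (μ i) (X i) s),
    exp_nat_mul, ← Finset.card_univ, ← Finset.prod_const]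
  exact Finset.prod_le_prod (fun i _ => integral_nonneg fun _ => (exp_pos _).le)
    fun i _ => integral_exp_mul_empiricalGap_le (hX i) (hab i) hm t

theorem measurable_empiricalGap {Y : Type*} [MeasurableSpace Y] [SFinite μ] {X : Y → Z → ℝ}
    (hX : Measurable (Function.uncurry X)) {m : ℕ} :
    Measurable fun p : Y × (Fin m → Z) => empiricalGap μ (X p.1) p.2 :=
  (hX.stronglyMeasurable.integral_prod_right' (ν := μ)).measurable.comp measurable_fst |>.sub
    (measurable_const.mul (Finset.measurable_sum _ fun j _ =>
      hX.comp (measurable_fst.prodMk ((measurable_pi_apply j).comp measurable_snd))))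

theorem integrable_prod_exp_mul_empiricalGap {ι Y : Type*} [Fintype ι] [MeasurableSpace Y]
    (μ : ι → Measure Z) [∀ i, IsProbabilityMeasure (μ i)] {ν : Measure Y} [IsFiniteMeasure ν]
    {X : ι → Y → Z → ℝ} {a b : ℝ} (hX : ∀ i, Measurable (Function.uncurry (X i)))
    (hab : ∀ i y z, X i y z ∈ Set.Icc a b) {m : ℕ} (hm : m ≠ 0) (t : ℝ) :
    Integrable
      (fun q : (ι → Fin m → Z) × Y => ∏ i, exp (t * empiricalGap (μ i) (X i q.2) (q.1 i)))
      ((Measure.pi fun i => Measure.pi fun _ : Fin m => μ i).prod ν) := by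
  refine .of_bound ?_ (∏ _i : ι, exp (|t| * (b - a))) (ae_of_all _ fun q => ?_)
  · refine (Finset.measurable_prod _ fun i _ =>
      (measurable_const.mul ?_).exp).aestronglyMeasurable
    exact (measurable_empiricalGap (hX i)).comp (measurable_snd.prodMk
      ((measurable_pi_apply i).comp measurable_fst))
  · rw [Real.norm_eq_abs, abs_of_nonneg (Finset.prod_nonneg fun _ _ => (exp_pos _).le)]
    refine Finset.prod_le_prod (fun _ _ => (exp_pos _).le) fun i _ => exp_le_exp.2 ?_
    calc t * empiricalGap (μ i) (X i q.2) (q.1 i)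
        ≤ |t| * |empiricalGap (μ i) (X i q.2) (q.1 i)| := by rw [← abs_mul]; exact le_abs_self _
      _ ≤ |t| * (b - a) := mul_le_mul_of_nonneg_left (abs_empiricalGap_le
          ((hX i).comp measurable_prodMk_left).aemeasurable (hab i q.2) hm _) (abs_nonneg t)

end EmpiricalGap

theorem MeasureTheory.Measure.bind_apply_univ_le_one {α β : Type*} [MeasurableSpace α]
    [MeasurableSpace β] {μ : Measure α} (hμ : μ Set.univ ≤ 1) {κ : α → Measure β}
    (hκ : ∀ a, κ a Set.univ ≤ 1) :
    μ.bind κ Set.univ ≤ 1 :=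
  calc μ.bind κ Set.univ ≤ ∫⁻ a, κ a Set.univ ∂μ :=
        Measure.bind_apply_le κ MeasurableSet.univ
    _ ≤ ∫⁻ _, 1 ∂μ := lintegral_mono hκ
    _ ≤ 1 := by simpa using hμ

theorem integral_integral_le_of_forall_integral_le {α β : Type*} [MeasurableSpace α]
    [MeasurableSpace β] {μ : Measure α} {ν : Measure β} [SFinite μ] [IsFiniteMeasure ν]
    (hν : ν Set.univ ≤ 1) {H : α → β → ℝ} (hH : Integrable (Function.uncurry H) (μ.prod ν))
    {c : ℝ} (hc : 0 ≤ c) (hHc : ∀ y, ∫ x, H x y ∂μ ≤ c) :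
    ∫ x, ∫ y, H x y ∂ν ∂μ ≤ c := by
  rw [integral_integral_swap hH]
  calc ∫ y, ∫ x, H x y ∂μ ∂ν ≤ ∫ _, c ∂ν :=
        integral_mono hH.integral_prod_right (integrable_const c) hHc
    _ = ν.real Set.univ * c := by rw [integral_const, smul_eq_mul]
    _ ≤ c :=
        mul_le_of_le_one_left hc (ENNReal.toReal_le_of_le_ofReal zero_le_one (by simpa using hν))

theorem exp_moment_multitask_le_general
    {𝒳 𝒴 F : Type*} [MeasurableSpace 𝒳] [MeasurableSpace 𝒴] [MeasurableSpace F]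
    (app : F → 𝒳 → 𝒴) (happ : Measurable (Function.uncurry app))
    (ℓ : 𝒴 → 𝒴 → ℝ) (hℓmeas : Measurable (Function.uncurry ℓ))
    (hℓ : ∀ y y', ℓ y y' ∈ Set.Icc (0 : ℝ) 1)
    (n m : ℕ) (hm : 1 ≤ m)
    (D : Fin n → Measure (𝒳 × 𝒴)) (hD : ∀ i, IsProbabilityMeasure (D i))
    (Pri : Measure (ProbabilityMeasure F)) [IsProbabilityMeasure Pri]
    (lam : ℝ) :
    (∫ S : Fin n → Fin m → 𝒳 × 𝒴,
        ∫ pf : ProbabilityMeasure F × (Fin n → F),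
          ∏ i, Real.exp ((lam / n) *
            ((∫ z, ℓ z.2 (app (pf.2 i) z.1) ∂(D i))
              - (1 / m : ℝ) * ∑ j, ℓ (S i j).2 (app (pf.2 i) (S i j).1)))
        ∂(Pri.bind fun P => (Measure.dirac P).prod (Measure.pi fun _ : Fin n => (P : Measure F)))
      ∂(Measure.pi fun i : Fin n => Measure.pi fun _ : Fin m => D i))
      ≤ Real.exp (lam ^ 2 / (8 * n * m)) := by
  have hm₀ : m ≠ 0 := by omega
  have := hD
  set loss : F → 𝒳 × 𝒴 → ℝ := fun f z => ℓ z.2 (app f z.1)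
  have hloss : Measurable (Function.uncurry loss) :=
    hℓmeas.comp (measurable_snd.snd.prodMk (happ.comp (measurable_fst.prodMk measurable_snd.fst)))
  set 𝔓 := Pri.bind fun P => (Measure.dirac P).prod (Measure.pi fun _ : Fin n => (P : Measure F))
  -- Only `𝔓 univ ≤ 1` is needed, and that holds without measurability of the kernel.
  have h𝔓 : 𝔓 Set.univ ≤ 1 :=
    Measure.bind_apply_univ_le_one measure_univ.le fun _ => measure_univ.le
  have : IsFiniteMeasure 𝔓 := ⟨h𝔓.trans_lt ENNReal.one_lt_top⟩
  show ∫ S, ∫ pf, ∏ i, exp (lam / n * empiricalGap (D i) (loss (pf.2 i)) (S i)) ∂𝔓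
    ∂(Measure.pi fun i => Measure.pi fun _ : Fin m => D i) ≤ _
  have hloss_task : ∀ i : Fin n,
      Measurable (Function.uncurry fun pf : ProbabilityMeasure F × (Fin n → F) => loss (pf.2 i)) :=
    fun i => hloss.comp
      (f := fun q : (ProbabilityMeasure F × (Fin n → F)) × (𝒳 × 𝒴) => (q.1.2 i, q.2)) (by fun_prop)
  refine integral_integral_le_of_forall_integral_le h𝔓
    (integrable_prod_exp_mul_empiricalGap D hloss_task (fun _ _ _ => hℓ _ _) hm₀ _)
    (exp_pos _).le fun pf => ?_
  refine (integral_prod_exp_mul_empiricalGap_le D (X := fun i => loss (pf.2 i))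
    (fun i => (hloss.comp measurable_prodMk_left).aemeasurable)
    (fun i => ae_of_all _ fun _ => hℓ _ _) hm₀ _).trans_eq ?_
  rcases eq_or_ne n 0 with rfl | hn
  · simp
  · rw [Fintype.card_fin]
    congr 1
    field_simp
    ring

/-- in the transductive multi-task setting with `n` tasks and `m` samples per
task, for a hyper-prior `Pri ∈ M(M(ℱ))` and the data-independent distribution `𝔓` on
`M(ℱ) × ℱⁿ` obtained by sampling `P ∼ Pri` and then `f₁,…,fₙ` i.i.d. from `P`, we have for all
`λ > 0`:
`E_{S₁,…,Sₙ} E_{(P,f₁,…,fₙ)∼𝔓} ∏ᵢ exp((λ/n)·Δᵢ(fᵢ)) ≤ exp(λ²/(8 n m))`,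
where `Δᵢ(f) = E_{(x,y)∼Dᵢ} ℓ(y, f(x)) − (1/m) Σⱼ ℓ(yᵢʲ, f(xᵢʲ))`. -/
theorem exp_moment_multitask_le
    {𝒳 𝒴 F : Type*} [MeasurableSpace 𝒳] [MeasurableSpace 𝒴] [MeasurableSpace F]
    (app : F → 𝒳 → 𝒴) (happ : Measurable (Function.uncurry app))
    (ℓ : 𝒴 → 𝒴 → ℝ) (hℓmeas : Measurable (Function.uncurry ℓ))
    (hℓ : ∀ y y', ℓ y y' ∈ Set.Icc (0 : ℝ) 1)
    (n m : ℕ) (hn : 1 ≤ n) (hm : 1 ≤ m)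
    (D : Fin n → Measure (𝒳 × 𝒴)) (hD : ∀ i, IsProbabilityMeasure (D i))
    (Pri : Measure (ProbabilityMeasure F)) [IsProbabilityMeasure Pri]
    (lam : ℝ) (hlam : 0 < lam) :
    (∫ S : Fin n → Fin m → 𝒳 × 𝒴,
        ∫ pf : ProbabilityMeasure F × (Fin n → F),
          ∏ i, Real.exp ((lam / n) *
            ((∫ z, ℓ z.2 (app (pf.2 i) z.1) ∂(D i))
              - (1 / m : ℝ) * ∑ j, ℓ (S i j).2 (app (pf.2 i) (S i j).1)))
        ∂(Pri.bind fun P => (Measure.dirac P).prod (Measure.pi fun _ : Fin n => (P : Measure F)))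
      ∂(Measure.pi fun i : Fin n => Measure.pi fun _ : Fin m => D i))
      ≤ Real.exp (lam ^ 2 / (8 * n * m)) :=
  exp_moment_multitask_le_general app happ ℓ hℓmeas hℓ n m hm D hD Pri lam
end
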